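/- There exists a function b : ℝ → ℝ that is real analytic on (0, ∞) such that for every h > 0 one has 0 < b(h) < 3 and F(b(h), h) = 0. (Thus the resonant value β*(h) depends real-analytically on the depth h.) -/

import Mathlib

noncomputable def F (β h : ℝ) : ℝ :=
  3 * Real.sqrt (Real.tanh h)
    - (1 + β) ^ ((1 : ℝ) / 4) * Real.sqrt (Real.tanh (h * Real.sqrt (1 + β)))
    - (4 + β) ^ ((1 : ℝ) / 4) * Real.sqrt (Real.tanh (h * Real.sqrt (4 + β)))

open Real

lemma tanh_pos {x : ℝ} (hx : 0 < x) : 0 < Real.tanh x := by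
  rw [Real.tanh_eq_sinh_div_cosh]
  exact div_pos (Real.sinh_pos_iff.2 hx) (Real.cosh_pos x)

lemma tanh_lt_one (x : ℝ) : Real.tanh x < 1 := by
  rw [Real.tanh_eq_sinh_div_cosh]
  exact (div_lt_one (Real.cosh_pos x)).2 (Real.sinh_lt_cosh x)

lemma hasDerivAt_tanh (x : ℝ) : HasDerivAt Real.tanh (1 / Real.cosh x ^ 2) x := by
  have h : HasDerivAt (fun y => Real.sinh y / Real.cosh y)
      ((Real.cosh x * Real.cosh x - Real.sinh x * Real.sinh x) / Real.cosh x ^ 2) x :=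
    (Real.hasDerivAt_sinh x).div (Real.hasDerivAt_cosh x) (Real.cosh_pos x).ne'
  have e : Real.tanh = fun y => Real.sinh y / Real.cosh y :=
    funext fun y => Real.tanh_eq_sinh_div_cosh y
  rw [e]
  convert h using 1
  have := Real.cosh_sq x
  have hc := (Real.cosh_pos x).ne'
  field_simp
  nlinarith [Real.cosh_sq x]

lemma analyticAt_sinh (x : ℝ) : AnalyticAt ℝ Real.sinh x := by
  have e : Real.sinh = fun y : ℝ => (Real.exp y - Real.exp (-y)) / 2 :=
    funext fun y => Real.sinh_eq y
  rw [e]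
  exact ((analyticAt_rexp.sub (analyticAt_rexp.comp analyticAt_id.neg)).div
    analyticAt_const two_ne_zero)

lemma analyticAt_cosh (x : ℝ) : AnalyticAt ℝ Real.cosh x := by
  have e : Real.cosh = fun y : ℝ => (Real.exp y + Real.exp (-y)) / 2 :=
    funext fun y => Real.cosh_eq y
  rw [e]
  exact ((analyticAt_rexp.add (analyticAt_rexp.comp analyticAt_id.neg)).div
    analyticAt_const two_ne_zero)

lemma analyticAt_tanh (x : ℝ) : AnalyticAt ℝ Real.tanh x := by
  have e : Real.tanh = fun y => Real.sinh y / Real.cosh y :=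
    funext fun y => Real.tanh_eq_sinh_div_cosh y
  rw [e]
  exact (analyticAt_sinh x).div (analyticAt_cosh x) (Real.cosh_pos x).ne'

lemma analyticAt_rpow_const {x c : ℝ} (hx : 0 < x) :
    AnalyticAt ℝ (fun y : ℝ => y ^ c) x := by
  have h1 : AnalyticAt ℂ (fun z : ℂ => z ^ (c : ℂ)) (x : ℂ) :=
    analyticAt_id.cpow analyticAt_const (Complex.ofReal_mem_slitPlane.2 hx)
  have h2 : AnalyticAt ℝ (fun z : ℂ => z ^ (c : ℂ)) (x : ℂ) := h1.restrictScalars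
  have h3 : AnalyticAt ℝ (fun y : ℝ => (y : ℂ)) x := Complex.ofRealCLM.analyticAt x
  have h4 : AnalyticAt ℝ (fun y : ℝ => (((y : ℂ) ^ (c : ℂ)).re)) x :=
    (Complex.reCLM.analyticAt _).comp (h2.comp h3)
  apply h4.congr
  filter_upwards [eventually_gt_nhds hx] with y hy
  rw [← Complex.ofReal_cpow hy.le]
  simp

lemma analyticAt_sqrt {x : ℝ} (hx : 0 < x) : AnalyticAt ℝ Real.sqrt x := by
  have e : Real.sqrt = fun y : ℝ => y ^ (1 / 2 : ℝ) := funext fun y => Real.sqrt_eq_rpow y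
  rw [e]
  exact analyticAt_rpow_const hx

/-- the single term `x ↦ x^{1/4} √(tanh (h √x))` -/
noncomputable def g (h x : ℝ) : ℝ :=
  x ^ ((1:ℝ)/4) * Real.sqrt (Real.tanh (h * Real.sqrt x))

lemma exists_hasDerivAt_g {h x : ℝ} (hh : 0 < h) (hx : 0 < x) :
    ∃ d : ℝ, 0 < d ∧ HasDerivAt (g h) d x := by
  have hsx : 0 < Real.sqrt x := Real.sqrt_pos.2 hx
  have ht : 0 < Real.tanh (h * Real.sqrt x) := tanh_pos (by positivity)
  have h1 : HasDerivAt (fun y : ℝ => y ^ ((1:ℝ)/4)) ((1/4) * x ^ ((1:ℝ)/4 - 1)) x :=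
    Real.hasDerivAt_rpow_const (Or.inl hx.ne')
  have h2 : HasDerivAt (fun y : ℝ => h * Real.sqrt y) (h * (1 / (2 * Real.sqrt x))) x :=
    (Real.hasDerivAt_sqrt hx.ne').const_mul h
  have h3 : HasDerivAt (fun y : ℝ => Real.tanh (h * Real.sqrt y))
      ((1 / Real.cosh (h * Real.sqrt x) ^ 2) * (h * (1 / (2 * Real.sqrt x)))) x :=
    (hasDerivAt_tanh _).comp x h2
  have h4 : HasDerivAt (fun y : ℝ => Real.sqrt (Real.tanh (h * Real.sqrt y)))
      ((1 / (2 * Real.sqrt (Real.tanh (h * Real.sqrt x)))) *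
        ((1 / Real.cosh (h * Real.sqrt x) ^ 2) * (h * (1 / (2 * Real.sqrt x))))) x :=
    (Real.hasDerivAt_sqrt ht.ne').comp x h3
  refine ⟨_, ?_, h1.mul h4⟩
  have hst : 0 < Real.sqrt (Real.tanh (h * Real.sqrt x)) := Real.sqrt_pos.2 ht
  have hch : 0 < Real.cosh (h * Real.sqrt x) := Real.cosh_pos _
  have hr1 : 0 < x ^ ((1:ℝ)/4) := Real.rpow_pos_of_pos hx _
  have hr2 : 0 < x ^ ((1:ℝ)/4 - 1) := Real.rpow_pos_of_pos hx _
  positivity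

lemma F_eq (β h : ℝ) :
    F β h = 3 * Real.sqrt (Real.tanh h) - g h (1 + β) - g h (4 + β) := rfl

lemma exists_hasDerivAt_F {β h : ℝ} (hh : 0 < h) (hβ : -1 < β) :
    ∃ d : ℝ, d < 0 ∧ HasDerivAt (fun β => F β h) d β := by
  obtain ⟨d1, hd1, hg1⟩ := exists_hasDerivAt_g hh (show (0:ℝ) < 1 + β by linarith)
  obtain ⟨d4, hd4, hg4⟩ := exists_hasDerivAt_g hh (show (0:ℝ) < 4 + β by linarith)
  have h1 : HasDerivAt (fun β : ℝ => g h (1 + β)) d1 β := by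
    simpa [Function.comp_def] using hg1.comp β ((hasDerivAt_id β).const_add 1)
  have h4 : HasDerivAt (fun β : ℝ => g h (4 + β)) d4 β := by
    simpa [Function.comp_def] using hg4.comp β ((hasDerivAt_id β).const_add 4)
  refine ⟨-(d1 + d4), by linarith, ?_⟩
  have := ((hasDerivAt_const β (3 * Real.sqrt (Real.tanh h))).sub h1).sub h4
  simpa [F_eq, sub_sub, Pi.sub_def, Pi.add_def] using this.congr_deriv (by ring)


lemma analytic_comp {E F' G' : Type*} [NormedAddCommGroup E] [NormedSpace ℝ E]
    [NormedAddCommGroup F'] [NormedSpace ℝ F'] [NormedAddCommGroup G'] [NormedSpace ℝ G']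
    {g : F' → G'} {f : E → F'} {x : E} (hg : AnalyticAt ℝ g (f x)) (hf : AnalyticAt ℝ f x) :
    AnalyticAt ℝ (fun y => g (f y)) x := hg.comp hf

lemma analyticAt_term {c β h : ℝ} (hc : 0 < c + β) (hh : 0 < h) :
    AnalyticAt ℝ (fun p : ℝ × ℝ =>
      (c + p.1) ^ ((1:ℝ)/4) * Real.sqrt (Real.tanh (p.2 * Real.sqrt (c + p.1)))) (β, h) := by
  have ha1 : AnalyticAt ℝ (fun p : ℝ × ℝ => c + p.1) (β, h) := analyticAt_const.add analyticAt_fst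
  have hsq : AnalyticAt ℝ (fun p : ℝ × ℝ => Real.sqrt (c + p.1)) (β, h) := by
    exact analytic_comp (analyticAt_sqrt hc) ha1
  have harg : AnalyticAt ℝ (fun p : ℝ × ℝ => p.2 * Real.sqrt (c + p.1)) (β, h) :=
    analyticAt_snd.mul hsq
  have htanh : AnalyticAt ℝ (fun p : ℝ × ℝ => Real.tanh (p.2 * Real.sqrt (c + p.1))) (β, h) := by
    exact analytic_comp (analyticAt_tanh _) harg
  have htp : 0 < Real.tanh (h * Real.sqrt (c + β)) :=
    tanh_pos (mul_pos hh (Real.sqrt_pos.2 hc))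
  have houter : AnalyticAt ℝ
      (fun p : ℝ × ℝ => Real.sqrt (Real.tanh (p.2 * Real.sqrt (c + p.1)))) (β, h) := by
    exact analytic_comp (analyticAt_sqrt htp) htanh
  have hpow : AnalyticAt ℝ (fun p : ℝ × ℝ => (c + p.1) ^ ((1:ℝ)/4)) (β, h) := by
    exact analytic_comp (f := fun p : ℝ × ℝ => c + p.1) (analyticAt_rpow_const hc) ha1
  exact hpow.mul houter

lemma analyticAt_F {β h : ℝ} (hβ : -1 < β) (hh : 0 < h) :
    AnalyticAt ℝ (fun p : ℝ × ℝ => F p.1 p.2) (β, h) := by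
  simp only [F]
  have h0 : AnalyticAt ℝ (fun p : ℝ × ℝ => 3 * Real.sqrt (Real.tanh p.2)) (β, h) := by
    have ht : AnalyticAt ℝ (fun p : ℝ × ℝ => Real.tanh p.2) (β, h) :=
      analytic_comp (analyticAt_tanh h) analyticAt_snd
    have hs : AnalyticAt ℝ (fun p : ℝ × ℝ => Real.sqrt (Real.tanh p.2)) (β, h) :=
      analytic_comp (analyticAt_sqrt (tanh_pos hh)) ht
    exact analyticAt_const.mul hs
  exact (h0.sub (analyticAt_term (by linarith) hh)).sub
    (analyticAt_term (by linarith) hh)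

lemma sqrt_four : Real.sqrt 4 = 2 := by
  rw [show (4:ℝ) = 2 ^ 2 by norm_num, Real.sqrt_sq (by norm_num : (0:ℝ) ≤ 2)]

lemma four_rpow_quarter : (4:ℝ) ^ ((1:ℝ)/4) = Real.sqrt 2 := by
  rw [show (4:ℝ) = 2 ^ (2:ℝ) by
    rw [show (2:ℝ) = ((2:ℕ):ℝ) by norm_num, Real.rpow_natCast]; norm_num,
    ← Real.rpow_mul (by norm_num : (0:ℝ) ≤ 2), Real.sqrt_eq_rpow]
  norm_num

lemma tanh_two_mul_lt {h : ℝ} (hh : 0 < h) : Real.tanh (2 * h) < 2 * Real.tanh h := by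
  rw [Real.tanh_eq_sinh_div_cosh, Real.tanh_eq_sinh_div_cosh]
  rw [div_lt_iff₀ (Real.cosh_pos _)]
  have hs2 := Real.sinh_two_mul h
  have hc2 := Real.cosh_two_mul h
  have hsp : 0 < Real.sinh h := Real.sinh_pos_iff.2 hh
  have hcp := Real.cosh_pos h
  have h1 : 1 < Real.cosh h := by
    have := Real.one_lt_cosh.2 hh.ne'
    exact this
  rw [hs2, hc2]
  rw [show 2 * (Real.sinh h / Real.cosh h) * (Real.cosh h ^ 2 + Real.sinh h ^ 2)
      = 2 * Real.sinh h * (Real.cosh h ^ 2 + Real.sinh h ^ 2) / Real.cosh h by ring,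
    lt_div_iff₀ hcp]
  nlinarith [mul_pos hsp (mul_pos hsp hsp)]

lemma F_zero_pos {h : ℝ} (hh : 0 < h) : 0 < F 0 h := by
  have ht := tanh_pos hh
  have ht2 := tanh_pos (show (0:ℝ) < 2 * h by linarith)
  simp only [F, add_zero, sqrt_four, four_rpow_quarter, Real.one_rpow, Real.sqrt_one,
    mul_one, one_mul]
  have e1 : Real.sqrt 2 * Real.sqrt (Real.tanh (h * 2)) = Real.sqrt (2 * Real.tanh (2 * h)) := by
    rw [← Real.sqrt_mul (by norm_num : (0:ℝ) ≤ 2), mul_comm h 2]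
  rw [e1]
  have e2 : Real.sqrt (2 * Real.tanh (2 * h)) < 2 * Real.sqrt (Real.tanh h) := by
    have : (2:ℝ) * Real.sqrt (Real.tanh h) = Real.sqrt (4 * Real.tanh h) := by
      rw [show (4:ℝ) * Real.tanh h = 2^2 * Real.tanh h by ring, Real.sqrt_mul (by positivity),
        Real.sqrt_sq (by norm_num : (0:ℝ) ≤ 2)]
    rw [this]
    apply Real.sqrt_lt_sqrt (by positivity)
    nlinarith [tanh_two_mul_lt hh]
  linarith [Real.sqrt_nonneg (Real.tanh h)]

lemma tanh_monotone : Monotone Real.tanh := by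
  have : ∀ x : ℝ, 0 < 1 / Real.cosh x ^ 2 := fun x => by positivity
  exact (strictMono_of_deriv_pos (fun x => by
    rw [(hasDerivAt_tanh x).deriv]; exact this x)).monotone

lemma sum_gt_three : (3:ℝ) < Real.sqrt 2 + (7:ℝ) ^ ((1:ℝ)/4) := by
  have h2 : (1.414:ℝ) < Real.sqrt 2 := by
    nlinarith [Real.sq_sqrt (show (0:ℝ) ≤ 2 by norm_num), Real.sqrt_nonneg 2]
  have h7 : (1.587:ℝ) < (7:ℝ) ^ ((1:ℝ)/4) := by
    have h1 : ((1.587:ℝ) ^ (4:ℝ)) ^ ((1:ℝ)/4) = 1.587 := by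
      rw [← Real.rpow_mul (by norm_num)]; norm_num
    calc (1.587:ℝ) = ((1.587:ℝ) ^ (4:ℝ)) ^ ((1:ℝ)/4) := h1.symm
      _ < 7 ^ ((1:ℝ)/4) := by
          apply Real.rpow_lt_rpow (by positivity) ?_ (by norm_num)
          rw [show (4:ℝ) = ((4:ℕ):ℝ) by norm_num, Real.rpow_natCast]
          norm_num
  linarith

lemma F_three_neg {h : ℝ} (hh : 0 < h) : F 3 h < 0 := by
  have e1 : (1:ℝ) + 3 = 4 := by norm_num
  have e4 : (4:ℝ) + 3 = 7 := by norm_num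
  simp only [F, e1, e4, four_rpow_quarter, sqrt_four]
  have hts : 0 < Real.sqrt (Real.tanh h) := Real.sqrt_pos.2 (tanh_pos hh)
  have t1 : Real.sqrt (Real.tanh h) ≤ Real.sqrt (Real.tanh (h * 2)) :=
    Real.sqrt_le_sqrt (tanh_monotone (by linarith))
  have h7 : (1:ℝ) ≤ Real.sqrt 7 := by
    rw [show (1:ℝ) = Real.sqrt 1 from Real.sqrt_one.symm]
    exact Real.sqrt_le_sqrt (by norm_num)
  have t4 : Real.sqrt (Real.tanh h) ≤ Real.sqrt (Real.tanh (h * Real.sqrt 7)) :=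
    Real.sqrt_le_sqrt (tanh_monotone (by nlinarith))
  have hs2 : (0:ℝ) ≤ Real.sqrt 2 := Real.sqrt_nonneg 2
  have hp7 : (0:ℝ) ≤ (7:ℝ) ^ ((1:ℝ)/4) := Real.rpow_nonneg (by norm_num) _
  nlinarith [sum_gt_three]

lemma F_strictAntiOn {h : ℝ} (hh : 0 < h) : StrictAntiOn (fun β => F β h) (Set.Icc 0 3) := by
  apply strictAntiOn_of_deriv_neg (convex_Icc 0 3)
  · intro x hx
    obtain ⟨d, _, hd⟩ := exists_hasDerivAt_F (β := x) hh (by linarith [hx.1])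
    exact hd.differentiableAt.continuousAt.continuousWithinAt
  · intro x hx
    rw [interior_Icc] at hx
    obtain ⟨d, hdneg, hd⟩ := exists_hasDerivAt_F (β := x) hh (by linarith [hx.1])
    rw [hd.deriv]; exact hdneg

lemma exists_root {h : ℝ} (hh : 0 < h) : ∃ β ∈ Set.Ioo (0:ℝ) 3, F β h = 0 := by
  have hcont : ContinuousOn (fun β => F β h) (Set.Icc 0 3) := by
    intro x hx
    obtain ⟨d, _, hd⟩ := exists_hasDerivAt_F (β := x) hh (by linarith [hx.1])
    exact hd.differentiableAt.continuousAt.continuousWithinAt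
  have := intermediate_value_Ioo' (by norm_num : (0:ℝ) ≤ 3) hcont
    (Set.mem_Ioo.2 ⟨F_three_neg hh, F_zero_pos hh⟩)
  obtain ⟨β, hβ, hfb⟩ := this
  exact ⟨β, hβ, hfb⟩

lemma root_unique {h β₁ β₂ : ℝ} (hh : 0 < h) (h1 : β₁ ∈ Set.Icc (0:ℝ) 3)
    (h2 : β₂ ∈ Set.Icc (0:ℝ) 3) (e1 : F β₁ h = 0) (e2 : F β₂ h = 0) : β₁ = β₂ :=
  (F_strictAntiOn hh).injOn h1 h2 (by simp [e1, e2])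

noncomputable def bfun : ℝ → ℝ := fun h =>
  if hh : 0 < h then (exists_root hh).choose else 1

lemma bfun_spec {h : ℝ} (hh : 0 < h) : bfun h ∈ Set.Ioo (0:ℝ) 3 ∧ F (bfun h) h = 0 := by
  rw [bfun, dif_pos hh]
  exact ⟨(exists_root hh).choose_spec.1, (exists_root hh).choose_spec.2⟩

/-- local analytic implicit function and global coincidence -/
lemma analyticAt_bfun {h₀ : ℝ} (hh : 0 < h₀) : AnalyticAt ℝ bfun h₀ := by
  obtain ⟨⟨hb0, hb3⟩, hroot⟩ := bfun_spec hh
  set β₀ := bfun h₀ with hβ₀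
  set x₀ : ℝ × ℝ := (β₀, h₀) with hx₀
  set G : ℝ × ℝ → ℝ × ℝ := fun p => (p.2, F p.1 p.2) with hG
  have hGa : AnalyticAt ℝ G x₀ := analyticAt_snd.prod (analyticAt_F (by linarith) hh)
  set L : ℝ × ℝ →L[ℝ] ℝ × ℝ := fderiv ℝ G x₀ with hL
  have hGs : HasStrictFDerivAt G L x₀ := hGa.hasStrictFDerivAt
  have hGd : HasFDerivAt G L x₀ := hGs.hasFDerivAt
  -- identify L (1,0)
  obtain ⟨d, hdneg, hder⟩ := exists_hasDerivAt_F (β := β₀) hh (by linarith)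
  have hL10 : L (1, 0) = (0, d) := by
    have c1 : HasDerivAt (fun t : ℝ => (t, h₀)) ((1:ℝ), (0:ℝ)) β₀ :=
      (hasDerivAt_id β₀).prodMk (hasDerivAt_const β₀ h₀)
    have hcomp : HasDerivAt (fun t : ℝ => G (t, h₀)) (L (1, 0)) β₀ :=
      hGd.comp_hasDerivAt β₀ c1
    have hexp : HasDerivAt (fun t : ℝ => (h₀, F t h₀)) ((0:ℝ), d) β₀ :=
      (hasDerivAt_const β₀ h₀).prodMk hder
    exact hcomp.unique hexp
  -- identify L (0,1)
  have hdiff2 : DifferentiableAt ℝ (fun t : ℝ => F β₀ t) h₀ := by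
    have : AnalyticAt ℝ (fun t : ℝ => F β₀ t) h₀ := by
      have hc : AnalyticAt ℝ (fun t : ℝ => ((β₀ : ℝ), t)) h₀ :=
        analyticAt_const.prod analyticAt_id
      exact analytic_comp (f := fun t : ℝ => ((β₀, t) : ℝ × ℝ))
        (analyticAt_F (show (-1:ℝ) < β₀ by linarith) hh) hc
    exact this.differentiableAt
  set bb : ℝ := deriv (fun t : ℝ => F β₀ t) h₀ with hbb
  have hL01 : L (0, 1) = (1, bb) := by
    have c1 : HasDerivAt (fun t : ℝ => (β₀, t)) ((0:ℝ), (1:ℝ)) h₀ :=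
      (hasDerivAt_const h₀ β₀).prodMk (hasDerivAt_id h₀)
    have hcomp : HasDerivAt (fun t : ℝ => G (β₀, t)) (L (0, 1)) h₀ :=
      hGd.comp_hasDerivAt h₀ c1
    have hexp : HasDerivAt (fun t : ℝ => (t, F β₀ t)) ((1:ℝ), bb) h₀ :=
      (hasDerivAt_id h₀).prodMk hdiff2.hasDerivAt
    exact hcomp.unique hexp
  have hLkey : ∀ u v : ℝ, L (u, v) = (v, u * d + v * bb) := by
    intro u v
    have e : (u, v) = u • ((1:ℝ), (0:ℝ)) + v • ((0:ℝ), (1:ℝ)) := by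
      simp [Prod.ext_iff]
    rw [e, map_add, map_smul, map_smul, hL10, hL01]
    simp [Prod.ext_iff, smul_eq_mul]
  -- inverse CLM
  set M : ℝ × ℝ →L[ℝ] ℝ × ℝ :=
    (d⁻¹ • (ContinuousLinearMap.snd ℝ ℝ ℝ - bb • ContinuousLinearMap.fst ℝ ℝ ℝ)).prod
      (ContinuousLinearMap.fst ℝ ℝ ℝ) with hM
  have hMapp : ∀ w z : ℝ, M (w, z) = ((z - bb * w) / d, w) := by
    intro w z
    simp [hM, ContinuousLinearMap.prod_apply, sub_eq_add_neg, div_eq_inv_mul]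
    ring_nf
  have hd0 : d ≠ 0 := ne_of_lt hdneg
  have h1 : Function.LeftInverse M L := by
    rintro ⟨u, v⟩
    rw [hLkey u v, hMapp]
    have : (u * d + v * bb - bb * v) / d = u := by field_simp; ring
    rw [this]
  have h2 : Function.RightInverse M L := by
    rintro ⟨w, z⟩
    rw [hMapp, hLkey]
    have : (z - bb * w) / d * d + w * bb = z := by field_simp; ring
    rw [this]
  set i : (ℝ × ℝ) ≃L[ℝ] (ℝ × ℝ) := ContinuousLinearEquiv.equivOfInverse L M h1 h2 with hi
  have hicoe : (i : ℝ × ℝ →L[ℝ] ℝ × ℝ) = L := rfl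
  have hGs' : HasStrictFDerivAt G (i : ℝ × ℝ →L[ℝ] ℝ × ℝ) x₀ := by rw [hicoe]; exact hGs
  set Φ : OpenPartialHomeomorph (ℝ × ℝ) (ℝ × ℝ) := hGs'.toOpenPartialHomeomorph G with hΦ
  have hΦcoe : ⇑Φ = G := hGs'.toOpenPartialHomeomorph_coe
  have hsrc : x₀ ∈ Φ.source := hGs'.mem_toOpenPartialHomeomorph_source
  have hΦx₀ : Φ x₀ = (h₀, 0) := by
    rw [hΦcoe]; simp [hG, hx₀, hroot]
  have hΦa : AnalyticAt ℝ Φ x₀ := by rw [hΦcoe]; exact hGa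
  have hfd : fderiv ℝ Φ x₀ = (i : ℝ × ℝ →L[ℝ] ℝ × ℝ) := by
    rw [hΦcoe, hicoe]
  have hsymm : AnalyticAt ℝ Φ.symm ((h₀, 0) : ℝ × ℝ) := by
    rw [← hΦx₀]
    exact Φ.analyticAt_symm' hsrc hΦa hfd
  -- local analytic candidate
  have hψa : AnalyticAt ℝ (fun t : ℝ => (Φ.symm (t, 0)).1) h₀ := by
    have hc : AnalyticAt ℝ (fun t : ℝ => ((t, (0:ℝ)) : ℝ × ℝ)) h₀ :=
      analyticAt_id.prod analyticAt_const
    exact analytic_comp (f := fun t : ℝ => Φ.symm (t, 0)) analyticAt_fst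
      (analytic_comp (f := fun t : ℝ => ((t, (0:ℝ)) : ℝ × ℝ)) hsymm hc)
  -- eventual equality with bfun
  have htgt : (h₀, (0:ℝ)) ∈ Φ.target := by
    rw [← hΦx₀]; exact Φ.map_source hsrc
  have hx₀inv : Φ.symm (h₀, 0) = x₀ := by
    rw [← hΦx₀]; exact Φ.left_inv hsrc
  have hcont : ContinuousAt (fun t : ℝ => (Φ.symm (t, 0)).1) h₀ := hψa.continuousAt
  have hev : ∀ᶠ t in nhds h₀, (Φ.symm (t, 0)).1 = bfun t := by
    have hev1 : ∀ᶠ t in nhds h₀, ((t, (0:ℝ)) : ℝ × ℝ) ∈ Φ.target := by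
      have : ContinuousAt (fun t : ℝ => ((t, (0:ℝ)) : ℝ × ℝ)) h₀ :=
        (continuous_id.prodMk continuous_const).continuousAt
      exact this (Φ.open_target.mem_nhds htgt)
    have hev2 : ∀ᶠ t in nhds h₀, (Φ.symm (t, 0)).1 ∈ Set.Ioo (0:ℝ) 3 := by
      have : ContinuousAt (fun t : ℝ => (Φ.symm (t, 0)).1) h₀ := hcont
      have hmem : (Φ.symm (h₀, 0)).1 ∈ Set.Ioo (0:ℝ) 3 := by
        rw [hx₀inv]; exact ⟨hb0, hb3⟩
      exact this (isOpen_Ioo.mem_nhds hmem)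
    have hev3 : ∀ᶠ t in nhds h₀, (0:ℝ) < t := eventually_gt_nhds hh
    filter_upwards [hev1, hev2, hev3] with t h1t h2t h3t
    have hGinv : G (Φ.symm (t, 0)) = (t, 0) := by
      rw [← hΦcoe]; exact Φ.right_inv h1t
    have hsnd : (Φ.symm (t, 0)).2 = t := congrArg Prod.fst hGinv
    have hFzero : F (Φ.symm (t, 0)).1 t = 0 := by
      have := congrArg Prod.snd hGinv
      simpa [hG, hsnd] using this
    have hspec := bfun_spec h3t
    exact root_unique h3t (Set.mem_Icc_of_Ioo h2t)
      (Set.mem_Icc_of_Ioo hspec.1) hFzero hspec.2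
  exact hψa.congr hev

/-- There is a real-analytic function `b` on `(0,∞)` with `0 < b h < 3` and
`F (b h) h = 0` for every `h > 0`. -/
theorem stmt4 :
    ∃ b : ℝ → ℝ, AnalyticOnNhd ℝ b (Set.Ioi (0 : ℝ)) ∧
      ∀ h : ℝ, 0 < h → 0 < b h ∧ b h < 3 ∧ F (b h) h = 0 := by
  refine ⟨bfun, fun h hh => analyticAt_bfun (Set.mem_Ioi.mp hh), fun h hh => ?_⟩
  obtain ⟨⟨h0, h3⟩, hr⟩ := bfun_spec hh
  exact ⟨h0, h3, hr⟩
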